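/- Let A be an invertible block matrix with block-tridiagonal structure with respect to a partition of indices into four sets Ω₁, Γ₁, Γ₂, Ω₂ (so the only nonzero off-diagonal coupling blocks are A_{Ω₁Γ₁}, A_{Γ₁Ω₁}, A_{Γ₁Γ₂}, A_{Γ₂Γ₁}, A_{Γ₂Ω₂}, A_{Ω₂Γ₂}). Suppose u solves A u = f where f vanishes on the blocks Γ₂ and Ω₂. Then the vector U := A⁻¹ (0, A_{Γ₁Γ₂} u_{Γ₂}, −A_{Γ₂Γ₁} u_{Γ₁}, 0)ᵀ satisfies U = (0, 0, u_{Γ₂}, u_{Ω₂})ᵀ; that is, the discrete polarized wavefield vanishes on Ω₁ ∪ Γ₁ and agrees with u on Γ₂ ∪ Ω₂. -/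
import Mathlib


open Matrix

/-- Discrete polarized wavefield: if `A` is block-tridiagonal w.r.t. the partition
`Ω₁, Γ₁, Γ₂, Ω₂`, is invertible, and `A u = f` with `f` vanishing on `Γ₂ ∪ Ω₂`, then
`U := A⁻¹ (0, A_{Γ₁Γ₂} u_{Γ₂}, −A_{Γ₂Γ₁} u_{Γ₁}, 0)ᵀ` vanishes on `Ω₁ ∪ Γ₁` and agrees
with `u` on `Γ₂ ∪ Ω₂`. -/
theorem stmt0 {O1 G1 G2 O2 : Type*} [Fintype O1] [Fintype G1] [Fintype G2] [Fintype O2]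
    [DecidableEq O1] [DecidableEq G1] [DecidableEq G2] [DecidableEq O2]
    (A : Matrix (O1 ⊕ G1 ⊕ G2 ⊕ O2) (O1 ⊕ G1 ⊕ G2 ⊕ O2) ℂ)
    (hA : IsUnit A)
    (hz1 : ∀ (i : O1) (j : G2), A (.inl i) (.inr (.inr (.inl j))) = 0)
    (hz2 : ∀ (i : O1) (j : O2), A (.inl i) (.inr (.inr (.inr j))) = 0)
    (hz3 : ∀ (i : G1) (j : O2), A (.inr (.inl i)) (.inr (.inr (.inr j))) = 0)
    (hz4 : ∀ (i : G2) (j : O1), A (.inr (.inr (.inl i))) (.inl j) = 0)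
    (hz5 : ∀ (i : O2) (j : O1), A (.inr (.inr (.inr i))) (.inl j) = 0)
    (hz6 : ∀ (i : O2) (j : G1), A (.inr (.inr (.inr i))) (.inr (.inl j)) = 0)
    (f u : (O1 ⊕ G1 ⊕ G2 ⊕ O2) → ℂ)
    (hf2 : ∀ i : G2, f (.inr (.inr (.inl i))) = 0)
    (hf3 : ∀ i : O2, f (.inr (.inr (.inr i))) = 0)
    (hu : A.mulVec u = f)
    (g : (O1 ⊕ G1 ⊕ G2 ⊕ O2) → ℂ)
    (hg1 : ∀ i : O1, g (.inl i) = 0)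
    (hg2 : ∀ i : G1, g (.inr (.inl i)) =
      ∑ j : G2, A (.inr (.inl i)) (.inr (.inr (.inl j))) * u (.inr (.inr (.inl j))))
    (hg3 : ∀ i : G2, g (.inr (.inr (.inl i))) =
      -∑ j : G1, A (.inr (.inr (.inl i))) (.inr (.inl j)) * u (.inr (.inl j)))
    (hg4 : ∀ i : O2, g (.inr (.inr (.inr i))) = 0)
    (U : (O1 ⊕ G1 ⊕ G2 ⊕ O2) → ℂ)
    (hU : A.mulVec U = g) :
    (∀ i : O1, U (.inl i) = 0) ∧ (∀ i : G1, U (.inr (.inl i)) = 0) ∧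
    (∀ i : G2, U (.inr (.inr (.inl i))) = u (.inr (.inr (.inl i)))) ∧
    (∀ i : O2, U (.inr (.inr (.inr i))) = u (.inr (.inr (.inr i)))) := by

  classical
  set w : (O1 ⊕ G1 ⊕ G2 ⊕ O2) → ℂ := fun i =>
    match i with
    | .inl _ => 0
    | .inr (.inl _) => 0
    | .inr (.inr (.inl j)) => u (.inr (.inr (.inl j)))
    | .inr (.inr (.inr j)) => u (.inr (.inr (.inr j))) with hw
  have hAw : A.mulVec w = g := by
    funext i
    have expand : ∀ v : (O1 ⊕ G1 ⊕ G2 ⊕ O2) → ℂ, A.mulVec v i =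
        (∑ j : O1, A i (.inl j) * v (.inl j)) +
        ((∑ j : G1, A i (.inr (.inl j)) * v (.inr (.inl j))) +
        ((∑ j : G2, A i (.inr (.inr (.inl j))) * v (.inr (.inr (.inl j)))) +
        (∑ j : O2, A i (.inr (.inr (.inr j))) * v (.inr (.inr (.inr j)))))) := by
      intro v
      simp [Matrix.mulVec, dotProduct, Fintype.sum_sum_type]
    rcases i with i | i | i | i
    · rw [expand]
      simp [hw, hz1, hz2, hg1]
    · rw [expand]
      simp [hw, hz3, hg2]
    · have h1 : A.mulVec u (.inr (.inr (.inl i))) = 0 := by rw [hu]; exact hf2 i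
      rw [expand] at h1 ⊢
      simp only [hw, hz4, zero_mul, mul_zero, Finset.sum_const_zero, zero_add] at h1 ⊢
      rw [hg3]
      linear_combination h1
    · have h1 : A.mulVec u (.inr (.inr (.inr i))) = 0 := by rw [hu]; exact hf3 i
      rw [expand] at h1 ⊢
      simp only [hw, hz5, hz6, zero_mul, mul_zero, Finset.sum_const_zero, zero_add] at h1 ⊢
      rw [hg4]
      exact h1
  have hinj := Matrix.mulVec_injective_iff_isUnit.2 hA
  have hUw : U = w := hinj (by rw [hU, hAw])
  refine ⟨?_, ?_, ?_, ?_⟩ <;> intro i <;> simp [hUw, hw]
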